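/- arXiv:1906.07691 — 4 statements merged into one kernel-verified Lean document; each statement's English description precedes it below -/
import Mathlib

section
/- Under the assumptions of the previous lemma, if additionally x_{t+1} = x_t − η_t(∇f(x̂_t) + Aᵀ ŷ_t) (so that ⟨x − x_{t+1}, x_{t+1} − x_t + η_t(∇f(x̂_t)+Aᵀŷ_t)⟩ ≥ 0 for all x), then {f(x̄_{t+1}) − f(x) − (1−θ_t)[f(x̄_t) − f(x)]}/θ_t ≤ ⟨x − x_{t+1}, x_{t+1} − x_t⟩/η_t + (L_f θ_t/2)‖x_{t+1} − x_t‖² − (μ_f θ_t/2)‖x − x_t‖² + ⟨Ax − Ax_{t+1}, ŷ_t⟩. -/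
open scoped RealInnerProductSpace

/-!
Smoothness at `x̂` bounds `f x̄'` from above, since `x̄' - x̂ = θ (x₁ - x₀)`. Strong convexity at `x̂`,
averaged with weights `1 - θ` and `θ` over `x̄` and `x`, bounds `(1 - θ) f x̄ + θ f x` from below, since
`(1 - θ) x̄ + θ x - x̂ = θ (x - x₀)`. Subtracting leaves `θ ⟪∇f x̂, x₁ - x⟫`, which the gradient step
rewrites as the proximal term plus the dual term.
-/

section InnerProductSpace

variable {E : Type*} [NormedAddCommGroup E] [InnerProductSpace ℝ E]

/-- The minorant is convex because `μ ≥ 0`. -/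
theorem quadratic_minorant_le_convexComb {f : E → ℝ} {g w : E} {μ θ : ℝ} (hμ : 0 ≤ μ)
    (hθ0 : 0 ≤ θ) (hθ1 : θ ≤ 1) (hf : ∀ z, f w + ⟪g, z - w⟫ + μ / 2 * ‖z - w‖ ^ 2 ≤ f z)
    (a b : E) :
    f w + ⟪g, (1 - θ) • a + θ • b - w⟫ + μ / 2 * ‖(1 - θ) • a + θ • b - w‖ ^ 2 ≤
      (1 - θ) * f a + θ * f b := by
  have hcomb : (1 - θ) • a + θ • b - w = (1 - θ) • (a - w) + θ • (b - w) := by module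
  have hsq : ‖(1 - θ) • (a - w) + θ • (b - w)‖ ^ 2 ≤
      (1 - θ) * ‖a - w‖ ^ 2 + θ * ‖b - w‖ ^ 2 :=
    (convexOn_univ_norm.pow (fun _ _ ↦ norm_nonneg _) 2).2 trivial trivial
      (sub_nonneg.2 hθ1) hθ0 (by ring)
  have ha := mul_le_mul_of_nonneg_left (hf a) (sub_nonneg.2 hθ1)
  have hb := mul_le_mul_of_nonneg_left (hf b) hθ0
  have hμsq := mul_le_mul_of_nonneg_left hsq (by positivity : 0 ≤ μ / 2)
  rw [hcomb, inner_add_right, real_inner_smul_right, real_inner_smul_right]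
  linarith

variable {F : Type*} [CompleteSpace E] [NormedAddCommGroup F]
  [InnerProductSpace ℝ F] [CompleteSpace F]

theorem inner_sub_eq_of_eq_sub_smul_add_adjoint {A : E →L[ℝ] F} {g x₀ x₁ : E} {y : F} {η : ℝ}
    (hη : η ≠ 0) (hx₁ : x₁ = x₀ - η • (g + ContinuousLinearMap.adjoint A y)) (x : E) :
    ⟪g, x₁ - x⟫ = ⟪x - x₁, x₁ - x₀⟫ / η + ⟪A x - A x₁, y⟫ := by
  have hstep : x₁ - x₀ = -η • (g + ContinuousLinearMap.adjoint A y) := by rw [hx₁]; module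
  rw [hstep, real_inner_smul_right, inner_add_right, ContinuousLinearMap.adjoint_inner_right,
    ← map_sub, real_inner_comm g, ← neg_sub x, inner_neg_right]
  field_simp
  ring

end InnerProductSpace

theorem stmt4 {E F : Type*} [NormedAddCommGroup E] [InnerProductSpace ℝ E] [CompleteSpace E]
    [NormedAddCommGroup F] [InnerProductSpace ℝ F] [CompleteSpace F]
    (f : E → ℝ) (f' : E → E) (A : E →L[ℝ] F) (Lf μf : ℝ) (hμf : 0 ≤ μf)
    (hsmooth : ∀ u v, f u ≤ f v + ⟪f' v, u - v⟫ + Lf / 2 * ‖u - v‖ ^ 2)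
    (hsc : ∀ z w, f w + ⟪f' w, z - w⟫ + μf / 2 * ‖z - w‖ ^ 2 ≤ f z)
    (θ η : ℝ) (hθ0 : 0 < θ) (hθ1 : θ ≤ 1) (hη : 0 < η)
    (xb x0 x1 xh xb' : E) (yh : F)
    (hxh : xh = (1 - θ) • xb + θ • x0)
    (hxb' : xb' = (1 - θ) • xb + θ • x1)
    (hupd : x1 = x0 - η • (f' xh + (ContinuousLinearMap.adjoint A) yh)) :
    ∀ x, (f xb' - f x - (1 - θ) * (f xb - f x)) / θ ≤
      ⟪x - x1, x1 - x0⟫ / η + Lf * θ / 2 * ‖x1 - x0‖ ^ 2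
      - μf * θ / 2 * ‖x - x0‖ ^ 2 + ⟪A x - A x1, yh⟫ := by
  intro x
  have hnorm (v : E) : ‖θ • v‖ ^ 2 = θ ^ 2 * ‖v‖ ^ 2 := by
    rw [norm_smul, Real.norm_of_nonneg hθ0.le, mul_pow]
  have hupper : f xb' ≤ f xh + θ * ⟪f' xh, x1 - x0⟫ + Lf / 2 * (θ ^ 2 * ‖x1 - x0‖ ^ 2) := by
    have hdiff : xb' - xh = θ • (x1 - x0) := by rw [hxb', hxh]; module
    simpa only [hdiff, real_inner_smul_right, hnorm] using hsmooth xb' xh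
  have hlower : f xh + θ * ⟪f' xh, x - x0⟫ + μf / 2 * (θ ^ 2 * ‖x - x0‖ ^ 2) ≤
      (1 - θ) * f xb + θ * f x := by
    have hdiff : (1 - θ) • xb + θ • x - xh = θ • (x - x0) := by rw [hxh]; module
    simpa only [hdiff, real_inner_smul_right, hnorm] using
      quadratic_minorant_le_convexComb hμf hθ0.le hθ1 (hsc · xh) xb x
  have hinner : ⟪f' xh, x1 - x0⟫ - ⟪f' xh, x - x0⟫ = ⟪f' xh, x1 - x⟫ := by
    rw [← inner_sub_right, sub_sub_sub_cancel_right]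
  have hstep := inner_sub_eq_of_eq_sub_smul_add_adjoint hη.ne' hupd x
  rw [div_le_iff₀ hθ0]
  linear_combination hupper + hlower + θ * hinner + θ * hstep
end

section
/- With f μ_f-strongly convex, g μ_g-strongly convex, iterates produced by updates satisfying the primal and dual proximal optimality conditions of LDPD with ŷ_t = (y_t − y_{t−1})α_t + y_t, the gap E_t = L(x̄_t, y) − L(x, ȳ_t) satisfies: [E_{t+1} − (1−θ_t)E_t]/θ_t ≤ ⟨x − x_{t+1}, x_{t+1} − x_t⟩/η_t + (L_f θ_t/2)‖x_{t+1} − x_t‖² − (μ_f θ_t/2)‖x − x_t‖² + ⟨y − y_{t+1}, y_{t+1} − y_t⟩/τ_t − (μ_g/2)‖y − y_{t+1}‖² + ⟨Ax − Ax_{t+1}, y_t − y_{t+1}⟩ − α_t⟨Ax − Ax_t, y_{t−1} − y_t⟩ + α_t⟨Ax_t − Ax_{t+1}, y_t − y_{t−1}⟩. -/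
open scoped RealInnerProductSpace
open Set Filter Topology

/-! The primal part comes from the descent lemma at `x̄_{t+1}` and strong convexity at `x̂_t`,
both along directions scaled by `θ` (`x̄_{t+1} - x̂_t = θ (x_{t+1} - x_t)`), after which the
gradient `∇f(x̂_t)` is eliminated through the primal update. The dual part combines convexity of
`g` at `ȳ_{t+1}` with the three-point inequality of the proximal step, obtained by comparing the
prox objective at `y_{t+1}` with its values on the segment towards `y` and letting the step go
to `0`. The bilinear terms then recombine exactly, since
`ŷ_t - y_{t+1} = (y_t - y_{t+1}) + α_t (y_t - y_{t-1})`. -/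

theorem nonneg_of_forall_nonneg_add_mul {C D : ℝ} (h : ∀ t, 0 < t → t ≤ 1 → 0 ≤ C + t * D) :
    0 ≤ C := by
  have hlim : Tendsto (fun t : ℝ ↦ C + t * D) (𝓝[>] 0) (𝓝 C) := by
    have := (continuous_const.add (continuous_id.mul continuous_const)).tendsto (0 : ℝ)
      (f := fun t : ℝ ↦ C + t * D)
    simpa using this.mono_left nhdsWithin_le_nhds
  exact ge_of_tendsto hlim <| by
    filter_upwards [Ioc_mem_nhdsGT one_pos] with t ht using h t ht.1 ht.2

section
variable {E : Type*} [NormedAddCommGroup E] [InnerProductSpace ℝ E]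

theorem convexOn_univ_of_add_inner_le {f : E → ℝ} {f' : E → E}
    (hf : ∀ z w, f w + ⟪f' w, z - w⟫ ≤ f z) : ConvexOn ℝ univ f := by
  refine ⟨convex_univ, fun a _ b _ s t hs ht hst ↦ ?_⟩
  obtain rfl : s = 1 - t := by linarith
  set c := (1 - t) • a + t • b
  have hcomb : (1 - t) * ⟪f' c, a - c⟫ + t * ⟪f' c, b - c⟫ = 0 := by
    rw [← real_inner_smul_right, ← real_inner_smul_right, ← inner_add_right]
    have : (1 - t) • (a - c) + t • (b - c) = 0 := by simp only [c]; module
    rw [this, inner_zero_right]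
  simp only [smul_eq_mul]
  linear_combination (1 - t) * hf a c + t * hf b c - hcomb

theorem norm_smul_sq (t : ℝ) (v : E) : ‖t • v‖ ^ 2 = t ^ 2 * ‖v‖ ^ 2 := by
  rw [norm_smul, Real.norm_eq_abs, mul_pow, sq_abs]

theorem interpolated_step_le {f : E → ℝ} {f' : E → E} {Lf μf θ : ℝ} (hμf : 0 ≤ μf)
    (hsmooth : ∀ u v, f u ≤ f v + ⟪f' v, u - v⟫ + Lf / 2 * ‖u - v‖ ^ 2)
    (hfsc : ∀ z w, f w + ⟪f' w, z - w⟫ + μf / 2 * ‖z - w‖ ^ 2 ≤ f z)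
    (hθ0 : 0 ≤ θ) (hθ1 : θ ≤ 1) (xb x0 x1 x : E) :
    f ((1 - θ) • xb + θ • x1) ≤ (1 - θ) * f xb + θ * f x
      + θ * ⟪f' ((1 - θ) • xb + θ • x0), x1 - x⟫
      + Lf * θ ^ 2 / 2 * ‖x1 - x0‖ ^ 2 - μf * θ ^ 2 / 2 * ‖x - x0‖ ^ 2 := by
  set xh := (1 - θ) • xb + θ • x0
  have hconvex : ConvexOn ℝ univ f := convexOn_univ_of_add_inner_le fun z w ↦ by
    linarith [hfsc z w, mul_nonneg hμf (sq_nonneg ‖z - w‖)]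
  have hmix : f ((1 - θ) • xb + θ • x) ≤ (1 - θ) * f xb + θ * f x :=
    hconvex.2 (mem_univ _) (mem_univ _) (by linarith) hθ0 (by ring)
  have hupper := hsmooth ((1 - θ) • xb + θ • x1) xh
  have hlower := hfsc ((1 - θ) • xb + θ • x) xh
  rw [show (1 - θ) • xb + θ • x1 - xh = θ • (x1 - x0) by simp only [xh]; module,
    real_inner_smul_right, norm_smul_sq] at hupper
  rw [show (1 - θ) • xb + θ • x - xh = θ • (x - x0) by simp only [xh]; module,
    real_inner_smul_right, norm_smul_sq] at hlower
  rw [show x1 - x = (x1 - x0) - (x - x0) by abel, inner_sub_right]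
  linarith

end

section
variable {E F : Type*} [NormedAddCommGroup E] [InnerProductSpace ℝ E] [CompleteSpace E]
    [NormedAddCommGroup F] [InnerProductSpace ℝ F] [CompleteSpace F]

theorem inner_sub_of_eq_sub_smul_add_adjoint {A : E →L[ℝ] F} {η : ℝ} (hη : η ≠ 0)
    {x0 x1 v : E} {w : F} (hx : x1 = x0 - η • (v + ContinuousLinearMap.adjoint A w)) (x : E) :
    ⟪v, x1 - x⟫ = ⟪x - x1, x1 - x0⟫ / η + ⟪A x - A x1, w⟫ := by
  have hv : v = η⁻¹ • (x0 - x1) - ContinuousLinearMap.adjoint A w := by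
    rw [hx, sub_sub_cancel, smul_smul, inv_mul_cancel₀ hη, one_smul, add_sub_cancel_right]
  rw [hv]
  simp only [inner_sub_left, inner_sub_right, real_inner_smul_left,
    ContinuousLinearMap.adjoint_inner_left, real_inner_comm x1 x0, real_inner_comm x x0,
    real_inner_comm x x1, real_inner_comm w]
  field_simp
  ring

end

section
variable {F : Type*} [NormedAddCommGroup F] [InnerProductSpace ℝ F]

theorem StrongConvexOn.add_inner_le_of_forall_prox_le {g : F → ℝ} {μ τ : ℝ}
    (hg : StrongConvexOn univ μ g) {b p : F}
    (hp : ∀ z, ‖p - b‖ ^ 2 / (2 * τ) + g p ≤ ‖z - b‖ ^ 2 / (2 * τ) + g z) (z : F) :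
    g p + ⟪b - p, z - p⟫ / τ + μ / 2 * ‖z - p‖ ^ 2 ≤ g z := by
  suffices 0 ≤ g z - g p - ⟪b - p, z - p⟫ / τ - μ / 2 * ‖z - p‖ ^ 2 by linarith
  refine nonneg_of_forall_nonneg_add_mul (D := ‖z - p‖ ^ 2 / (2 * τ) + μ / 2 * ‖z - p‖ ^ 2)
    fun t ht0 ht1 ↦ ?_
  have hmin := hp (p + t • (z - p))
  have hconv := hg.2 (mem_univ p) (mem_univ z) (sub_nonneg.2 ht1) ht0.le (sub_add_cancel 1 t)
  rw [show p + t • (z - p) - b = (p - b) + t • (z - p) by abel, norm_add_sq_real,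
    real_inner_smul_right, norm_smul_sq] at hmin
  rw [show (1 - t) • p + t • z = p + t • (z - p) by module, norm_sub_rev] at hconv
  simp only [smul_eq_mul] at hconv
  have : 0 ≤ t * (g z - g p - ⟪b - p, z - p⟫ / τ - μ / 2 * ‖z - p‖ ^ 2
      + t * (‖z - p‖ ^ 2 / (2 * τ) + μ / 2 * ‖z - p‖ ^ 2)) := by
    rw [show b - p = -(p - b) by abel, inner_neg_left]
    linear_combination hmin + hconv
  exact nonneg_of_mul_nonneg_right this ht0

theorem StrongConvexOn.sub_le_of_forall_prox_linear_le {g : F → ℝ} {μ τ : ℝ}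
    (hg : StrongConvexOn univ μ g) (hτ : τ ≠ 0) {y0 y1 u : F}
    (hy : ∀ z, ‖y1 - (y0 + τ • u)‖ ^ 2 / (2 * τ) + g y1 ≤ ‖z - (y0 + τ • u)‖ ^ 2 / (2 * τ) + g z)
    (y : F) :
    g y1 - g y ≤ ⟪y - y1, y1 - y0⟫ / τ - ⟪u, y - y1⟫ - μ / 2 * ‖y - y1‖ ^ 2 := by
  have h := hg.add_inner_le_of_forall_prox_le hy y
  rw [show y0 + τ • u - y1 = -(y1 - y0) + τ • u by abel, inner_add_left, inner_neg_left,
    real_inner_smul_left, add_div, neg_div, mul_div_cancel_left₀ _ hτ] at h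
  rw [real_inner_comm (y1 - y0)]
  linarith

end

theorem stmt11_general {E F : Type*} [NormedAddCommGroup E] [InnerProductSpace ℝ E] [CompleteSpace E]
    [NormedAddCommGroup F] [InnerProductSpace ℝ F] [CompleteSpace F]
    (f : E → ℝ) (f' : E → E) (g : F → ℝ) (A : E →L[ℝ] F)
    (Lf μf μg : ℝ) (hμf : 0 ≤ μf) (hμg : 0 ≤ μg)
    (hsmooth : ∀ u v, f u ≤ f v + ⟪f' v, u - v⟫ + Lf / 2 * ‖u - v‖ ^ 2)
    (hfsc : ∀ z w, f w + ⟪f' w, z - w⟫ + μf / 2 * ‖z - w‖ ^ 2 ≤ f z)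
    (hg : StrongConvexOn Set.univ μg g)
    (θ η τ α : ℝ) (hθ0 : 0 < θ) (hθ1 : θ ≤ 1) (hη : 0 < η) (hτ : 0 < τ)
    (xb xb' x0 x1 xh : E) (yb yb' ym1 y0 y1 yh : F)
    (hxh : xh = (1 - θ) • xb + θ • x0)
    (hyh : yh = α • (y0 - ym1) + y0)
    (hx : x1 = x0 - η • (f' xh + (ContinuousLinearMap.adjoint A) yh))
    (hxb' : xb' = (1 - θ) • xb + θ • x1)
    (hy : ∀ z, ‖y1 - (y0 + τ • A x1)‖ ^ 2 / (2 * τ) + g y1 ≤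
      ‖z - (y0 + τ • A x1)‖ ^ 2 / (2 * τ) + g z)
    (hyb' : yb' = (1 - θ) • yb + θ • y1)
    (L : E → F → ℝ) (hL : ∀ u v, L u v = f u + ⟪A u, v⟫ - g v)
    (x : E) (y : F)
    (E0 E1 : ℝ) (hE0 : E0 = L xb y - L x yb) (hE1 : E1 = L xb' y - L x yb') :
    (E1 - (1 - θ) * E0) / θ ≤
      ⟪x - x1, x1 - x0⟫ / η + Lf * θ / 2 * ‖x1 - x0‖ ^ 2
      - μf * θ / 2 * ‖x - x0‖ ^ 2
      + ⟪y - y1, y1 - y0⟫ / τ - μg / 2 * ‖y - y1‖ ^ 2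
      + ⟪A x - A x1, y0 - y1⟫ - α * ⟪A x - A x0, ym1 - y0⟫
      + α * ⟪A x0 - A x1, y0 - ym1⟫ := by
  have hprimal := interpolated_step_le hμf hsmooth hfsc hθ0.le hθ1 xb x0 x1 x
  rw [← hxh, ← hxb', inner_sub_of_eq_sub_smul_add_adjoint hη.ne' hx] at hprimal
  have hdual := hg.sub_le_of_forall_prox_linear_le hτ.ne' hy y
  have hdual_avg : g yb' ≤ (1 - θ) * g yb + θ * g y1 := by
    have := (strongConvexOn_zero.1 (hg.mono hμg)).2 (mem_univ yb) (mem_univ y1)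
      (sub_nonneg.2 hθ1) hθ0.le (sub_add_cancel 1 θ)
    simpa only [← hyb', smul_eq_mul] using this
  have hgap : E1 - (1 - θ) * E0 = f xb' - (1 - θ) * f xb + (g yb' - (1 - θ) * g yb)
      + θ * (⟪A x1, y⟫ - ⟪A x, y1⟫ - g y - f x) := by
    simp only [hE0, hE1, hL, hxb', hyb', map_add, map_smul, inner_add_left, inner_add_right,
      real_inner_smul_left, real_inner_smul_right]
    ring
  have hcoupling : ⟪A x - A x1, yh⟫ - ⟪A x1, y - y1⟫ + ⟪A x1, y⟫ - ⟪A x, y1⟫ =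
      ⟪A x - A x1, y0 - y1⟫ - α * ⟪A x - A x0, ym1 - y0⟫ + α * ⟪A x0 - A x1, y0 - ym1⟫ := by
    simp only [hyh, inner_add_right, inner_sub_left, inner_sub_right, real_inner_smul_right]
    ring
  rw [hgap, div_le_iff₀ hθ0]
  linear_combination hprimal + hdual_avg + θ * hdual + θ * hcoupling

theorem stmt11 {E F : Type*} [NormedAddCommGroup E] [InnerProductSpace ℝ E] [CompleteSpace E]
    [NormedAddCommGroup F] [InnerProductSpace ℝ F] [CompleteSpace F]
    (f : E → ℝ) (f' : E → E) (g : F → ℝ) (A : E →L[ℝ] F)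
    (Lf μf μg : ℝ) (hμf : 0 ≤ μf) (hμg : 0 ≤ μg)
    (hsmooth : ∀ u v, f u ≤ f v + ⟪f' v, u - v⟫ + Lf / 2 * ‖u - v‖ ^ 2)
    (hfsc : ∀ z w, f w + ⟪f' w, z - w⟫ + μf / 2 * ‖z - w‖ ^ 2 ≤ f z)
    (hg : StrongConvexOn Set.univ μg g)
    (θ η τ α : ℝ) (hθ0 : 0 < θ) (hθ1 : θ ≤ 1) (hη : 0 < η) (hτ : 0 < τ) (hα : 0 ≤ α)
    (xb xb' x0 x1 xh : E) (yb yb' ym1 y0 y1 yh : F)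
    (hxh : xh = (1 - θ) • xb + θ • x0)
    (hyh : yh = α • (y0 - ym1) + y0)
    (hx : x1 = x0 - η • (f' xh + (ContinuousLinearMap.adjoint A) yh))
    (hxb' : xb' = (1 - θ) • xb + θ • x1)
    (hy : ∀ z, ‖y1 - (y0 + τ • A x1)‖ ^ 2 / (2 * τ) + g y1 ≤
      ‖z - (y0 + τ • A x1)‖ ^ 2 / (2 * τ) + g z)
    (hyb' : yb' = (1 - θ) • yb + θ • y1)
    (L : E → F → ℝ) (hL : ∀ u v, L u v = f u + ⟪A u, v⟫ - g v)
    (x : E) (y : F)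
    (E0 E1 : ℝ) (hE0 : E0 = L xb y - L x yb) (hE1 : E1 = L xb' y - L x yb') :
    (E1 - (1 - θ) * E0) / θ ≤
      ⟪x - x1, x1 - x0⟫ / η + Lf * θ / 2 * ‖x1 - x0‖ ^ 2
      - μf * θ / 2 * ‖x - x0‖ ^ 2
      + ⟪y - y1, y1 - y0⟫ / τ - μg / 2 * ‖y - y1‖ ^ 2
      + ⟪A x - A x1, y0 - y1⟫ - α * ⟪A x - A x0, ym1 - y0⟫
      + α * ⟪A x0 - A x1, y0 - ym1⟫ :=
  stmt11_general f f' g A Lf μf μg hμf hμg hsmooth hfsc hg θ η τ α hθ0 hθ1 hη hτ xb xb' x0 x1 xh yb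
    yb' ym1 y0 y1 yh hxh hyh hx hxb' hy hyb' L hL x y E0 E1 hE0 hE1
end

section
/- Under the hypotheses of the fully accelerated LDPD with μ_g > 0 and the parameter choices τ = 3/μ_g, τ_t = τ/t, η_t = t/(2L_f + τ‖A‖²), if (x*, y*) is a saddle point of L, then ‖ȳ_{k+1} − y*‖² ≤ (2/(μ_g k(k+1)))[(2L_f + τ‖A‖²)‖x* − x_1‖² + ‖y* − y_1‖²/τ], i.e. ‖ȳ_{k+1} − y*‖ = O(1/k). -/
/-!
A Lyapunov argument. With `C = 2 Lf + τ ‖A‖²`, the potential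
`Wₙ = τ n (n - 1) (L(x̄ₙ, y*) - L(x*, ȳₙ)) + τ C ‖x* - xₙ‖² + n² ‖y* - yₙ‖²
  + (n - 1)² ‖yₙ - yₙ₋₁‖² - 2 τ (n - 1) ⟪A (xₙ - x*), yₙ - yₙ₋₁⟫`
does not increase along the iteration: the weights `θₜ = 2 / (t + 1)` make the averaged gap
telescope, the primal step is an exact three-point identity, the prox step gains the factor
`(t + 1)²` on `‖y* - yₜ₊₁‖²` from the strong convexity of `g` (this is where `τ μ_g = 3` enters),
and the cross term created by the extrapolation `ŷₜ` is absorbed by Young's inequality, as is the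
bilinear term of `W` itself. Since `W₁ = τ C ‖x* - x₁‖² + ‖y* - y₁‖²` while strong convexity at the
saddle point gives `Wₖ₊₁ ≥ τ k (k + 1) μ_g / 2 ‖ȳₖ₊₁ - y*‖²`, the bound follows.
-/

open scoped RealInnerProductSpace Topology
open Set Filter

section StrongConvexity

variable {G : Type*} [NormedAddCommGroup G] [InnerProductSpace ℝ G]

theorem StrongConvexOn.add_sq_le_of_isMinOn {s : Set G} {m : ℝ} {φ : G → ℝ} {w z : G}
    (hφ : StrongConvexOn s m φ) (hw : IsMinOn φ s w) (hws : w ∈ s) (hzs : z ∈ s) :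
    φ w + m / 2 * ‖z - w‖ ^ 2 ≤ φ z := by
  have key : ∀ a ∈ Ioo (0 : ℝ) 1, (1 - a) * (m / 2 * ‖z - w‖ ^ 2) ≤ φ z - φ w := by
    rintro a ⟨ha0, ha1⟩
    have hconv := hφ.2 hzs hws ha0.le (sub_nonneg.2 ha1.le) (add_sub_cancel a 1)
    have hmin := isMinOn_iff.1 hw _
      (hφ.1 hzs hws ha0.le (sub_nonneg.2 ha1.le) (add_sub_cancel a 1))
    simp only [smul_eq_mul] at hconv
    exact le_of_mul_le_mul_left (by linarith) ha0
  have hlim : Tendsto (fun a : ℝ => (1 - a) * (m / 2 * ‖z - w‖ ^ 2)) (𝓝[>] 0)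
      (𝓝 (m / 2 * ‖z - w‖ ^ 2)) :=
    ((show Continuous fun a : ℝ => (1 - a) * (m / 2 * ‖z - w‖ ^ 2) by fun_prop).tendsto' 0 _
      (by simp)).mono_left nhdsWithin_le_nhds
  linarith [le_of_tendsto hlim (eventually_of_mem (Ioo_mem_nhdsGT one_pos) key)]

theorem strongConvexOn_univ_norm_sub_sq_div (c : G) (s : ℝ) :
    StrongConvexOn univ s⁻¹ fun z => ‖z - c‖ ^ 2 / (2 * s) := by
  refine ⟨convex_univ, fun u _ v _ a b _ _ hab => le_of_eq ?_⟩
  obtain rfl := eq_sub_of_add_eq' hab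
  simp only [smul_eq_mul, ← real_inner_self_eq_norm_sq, inner_sub_left, inner_sub_right,
    inner_add_left, inner_add_right, real_inner_smul_left, real_inner_smul_right]
  rw [real_inner_comm u v, real_inner_comm u c, real_inner_comm v c]
  ring

theorem StrongConvexOn.prox_le {g : G → ℝ} {μ s : ℝ} (hg : StrongConvexOn univ μ g) (hs : 0 < s)
    {y p y' : G}
    (hy' : ∀ z, ‖y' - (y + s • p)‖ ^ 2 / (2 * s) + g y' ≤ ‖z - (y + s • p)‖ ^ 2 / (2 * s) + g z)
    (z : G) :
    2 * s * (g y' - g z) ≤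
      ‖z - y‖ ^ 2 - ‖y' - y‖ ^ 2 - (1 + s * μ) * ‖z - y'‖ ^ 2 - 2 * s * ⟪p, z - y'⟫ := by
  have hφ : StrongConvexOn univ (s⁻¹ + μ) fun w => ‖w - (y + s • p)‖ ^ 2 / (2 * s) + g w :=
    ((strongConvexOn_univ_norm_sub_sq_div _ s).add hg).mono fun r =>
      le_of_eq (by simp only [Pi.add_apply]; ring)
  have hgrowth := hφ.add_sq_le_of_isMinOn (isMinOn_iff.2 fun z _ => hy' z) trivial trivial (z := z)
  have hexp : ∀ w, ‖w - (y + s • p)‖ ^ 2 = ‖w - y‖ ^ 2 - 2 * s * ⟪p, w - y⟫ + s ^ 2 * ‖p‖ ^ 2 :=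
    fun w => by
      rw [← sub_sub, norm_sub_sq_real, inner_smul_right, norm_smul, mul_pow, Real.norm_eq_abs,
        sq_abs, real_inner_comm]
      ring
  have hinner : ⟪p, z - y'⟫ = ⟪p, z - y⟫ - ⟪p, y' - y⟫ := by
    rw [← inner_sub_right, sub_sub_sub_cancel_right]
  rw [hexp, hexp] at hgrowth
  rw [hinner]
  have h2s : 0 < 2 * s := by positivity
  have := mul_le_mul_of_nonneg_left hgrowth h2s.le
  field_simp at this
  linarith

end StrongConvexity

section Smooth

variable {E : Type*} [NormedAddCommGroup E] [InnerProductSpace ℝ E] {f : E → ℝ} {f' : E → E}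

theorem smooth_convex_interpolation_le {Lf θ : ℝ}
    (hsmooth : ∀ u v, f u ≤ f v + ⟪f' v, u - v⟫ + Lf / 2 * ‖u - v‖ ^ 2)
    (hconv : ∀ u v, f v + ⟪f' v, u - v⟫ ≤ f u) (hθ0 : 0 ≤ θ) (hθ1 : θ ≤ 1) (a b b' z : E) :
    f ((1 - θ) • a + θ • b') ≤ (1 - θ) * f a + θ * f z +
      θ * ⟪f' ((1 - θ) • a + θ • b), b' - z⟫ + Lf / 2 * θ ^ 2 * ‖b' - b‖ ^ 2 := by
  set c := (1 - θ) • a + θ • b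
  have hstep : (1 - θ) • a + θ • b' - c = θ • (b' - b) := by simp only [c]; module
  have hsplit : (1 - θ) • a + θ • b' - c = (1 - θ) • (a - c) + θ • (z - c) + θ • (b' - z) := by
    simp only [c]; module
  have hup := hsmooth ((1 - θ) • a + θ • b') c
  rw [hsplit, inner_add_right, inner_add_right, real_inner_smul_right, real_inner_smul_right,
    real_inner_smul_right, ← hsplit, hstep, norm_smul, mul_pow, Real.norm_eq_abs, sq_abs] at hup
  have ha := mul_le_mul_of_nonneg_left (hconv a c) (sub_nonneg.2 hθ1)
  have hz := mul_le_mul_of_nonneg_left (hconv z c) hθ0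
  linarith

theorem eq_zero_of_le_tangent_of_isMinOn {xs : E} (htangent : ∀ u v, f u ≤ f v + ⟪f' v, u - v⟫)
    (hmin : IsMinOn f univ xs) (v : E) : f' v = 0 := by
  have key : ∀ v, ‖f' v‖ ^ 2 ≤ f v - f xs := fun v => by
    have := htangent (v - f' v) v
    rw [sub_sub_cancel_left, inner_neg_right, real_inner_self_eq_norm_sq] at this
    linarith [isMinOn_iff.1 hmin (v - f' v) trivial]
  have h0 : f' xs = 0 := by simpa using key xs
  have hv : f v ≤ f xs := by simpa [h0] using htangent v xs
  have : ‖f' v‖ ^ 2 ≤ 0 := by linarith [key v]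
  simpa using this

end Smooth

section Algorithm

variable {E F : Type*} [NormedAddCommGroup E] [InnerProductSpace ℝ E]
  [NormedAddCommGroup F] [InnerProductSpace ℝ F]

theorem two_mul_mul_inner_apply_le (A : E →L[ℝ] F) (u : E) (v : F) (a b : ℝ) :
    2 * a * b * ⟪A u, v⟫ ≤ a ^ 2 * ‖A‖ ^ 2 * ‖u‖ ^ 2 + b ^ 2 * ‖v‖ ^ 2 := by
  have hAu : |⟪A u, v⟫| ≤ ‖A‖ * ‖u‖ * ‖v‖ :=
    (abs_real_inner_le_norm _ _).trans (mul_le_mul_of_nonneg_right (A.le_opNorm u) (norm_nonneg v))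
  calc 2 * a * b * ⟪A u, v⟫ ≤ 2 * |a| * |b| * |⟪A u, v⟫| := by
        have := le_abs_self (a * b * ⟪A u, v⟫)
        rw [abs_mul, abs_mul] at this
        linarith
    _ ≤ 2 * (|a| * ‖A‖ * ‖u‖) * (|b| * ‖v‖) := by
        have := mul_le_mul_of_nonneg_left hAu (by positivity : (0 : ℝ) ≤ 2 * |a| * |b|)
        linarith
    _ ≤ (|a| * ‖A‖ * ‖u‖) ^ 2 + (|b| * ‖v‖) ^ 2 := two_mul_le_add_sq _ _
    _ = a ^ 2 * ‖A‖ ^ 2 * ‖u‖ ^ 2 + b ^ 2 * ‖v‖ ^ 2 := by simp only [mul_pow, sq_abs]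

noncomputable def lagrangian (f : E → ℝ) (g : F → ℝ) (A : E →L[ℝ] F) (u : E) (v : F) : ℝ :=
  f u + ⟪A u, v⟫ - g v

theorem StrongConvexOn.sq_norm_sub_le_lagrangian_sub {f : E → ℝ} {g : F → ℝ} {A : E →L[ℝ] F}
    {μ : ℝ} (hg : StrongConvexOn univ μ g) {xs : E} {ys : F}
    (hsaddle : ∀ u v, lagrangian f g A xs v ≤ lagrangian f g A xs ys ∧
      lagrangian f g A xs ys ≤ lagrangian f g A u ys) (u : E) (v : F) :
    μ / 2 * ‖v - ys‖ ^ 2 ≤ lagrangian f g A u ys - lagrangian f g A xs v := by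
  have haff : ConcaveOn ℝ univ fun v => f xs + ⟪A xs, v⟫ :=
    (concaveOn_const _ convex_univ).add ((innerSL ℝ (A xs)).toLinearMap.concaveOn convex_univ)
  have hφ : StrongConvexOn univ μ fun v => -lagrangian f g A xs v := by
    unfold StrongConvexOn
    convert hg.sub (uniformConcaveOn_zero.2 haff) using 1
    · exact (add_zero _).symm
    · funext v; simp only [lagrangian, Pi.sub_apply]; ring
  have := hφ.add_sq_le_of_isMinOn (isMinOn_iff.2 fun v _ => neg_le_neg (hsaddle u v).1)
    trivial trivial (z := v)
  linarith [(hsaddle u v).2]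

noncomputable def ldpdPotential (f : E → ℝ) (g : F → ℝ) (A : E →L[ℝ] F) (Lf τ : ℝ) (xs : E)
    (ys : F) (x xb : ℕ → E) (y yb : ℕ → F) (n : ℕ) : ℝ :=
  τ * n * (n - 1) * (lagrangian f g A (xb n) ys - lagrangian f g A xs (yb n)) +
    τ * (2 * Lf + τ * ‖A‖ ^ 2) * ‖xs - x n‖ ^ 2 + n ^ 2 * ‖ys - y n‖ ^ 2 +
    (n - 1) ^ 2 * ‖y n - y (n - 1)‖ ^ 2 - 2 * τ * (n - 1) * ⟪A (x n - xs), y n - y (n - 1)⟫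

theorem ldpdPotential_one (f : E → ℝ) (g : F → ℝ) (A : E →L[ℝ] F) (Lf τ : ℝ) (xs : E)
    (ys : F) (x xb : ℕ → E) (y yb : ℕ → F) :
    ldpdPotential f g A Lf τ xs ys x xb y yb 1 =
      τ * (2 * Lf + τ * ‖A‖ ^ 2) * ‖xs - x 1‖ ^ 2 + ‖ys - y 1‖ ^ 2 := by
  simp [ldpdPotential]

theorem StrongConvexOn.mul_sq_norm_le_ldpdPotential {f : E → ℝ} {g : F → ℝ} {A : E →L[ℝ] F}
    {Lf μ τ : ℝ} (hg : StrongConvexOn univ μ g) (hLf : 0 ≤ Lf) (hτ : 0 ≤ τ) {xs : E} {ys : F}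
    (hsaddle : ∀ u v, lagrangian f g A xs v ≤ lagrangian f g A xs ys ∧
      lagrangian f g A xs ys ≤ lagrangian f g A u ys)
    (x xb : ℕ → E) (y yb : ℕ → F) {n : ℕ} (hn : 1 ≤ n) :
    τ * n * (n - 1) * (μ / 2 * ‖yb n - ys‖ ^ 2) ≤ ldpdPotential f g A Lf τ xs ys x xb y yb n := by
  have hn' : (1 : ℝ) ≤ n := by exact_mod_cast hn
  have hgap := mul_le_mul_of_nonneg_left (hg.sq_norm_sub_le_lagrangian_sub hsaddle (xb n) (yb n))
    (by positivity : 0 ≤ τ * n * (n - 1))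
  have hyoung := two_mul_mul_inner_apply_le A (x n - xs) (y n - y (n - 1)) τ (n - 1)
  rw [norm_sub_rev] at hyoung
  have hLf_term : 0 ≤ 2 * τ * Lf * ‖xs - x n‖ ^ 2 := by positivity
  have hy_term : 0 ≤ (n : ℝ) ^ 2 * ‖ys - y n‖ ^ 2 := by positivity
  unfold ldpdPotential
  linarith

variable [CompleteSpace E] [CompleteSpace F]

structure IsFullyAccelLDPD (f' : E → E) (g : F → ℝ) (A : E →L[ℝ] F) (Lf μg τ : ℝ)
    (θ α τt η : ℕ → ℝ) (x xb xh : ℕ → E) (y yb yh : ℕ → F) : Prop where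
  θ_eq : ∀ t, θ t = 2 / ((t : ℝ) + 1)
  α_eq : ∀ t, α t = ((t : ℝ) - 1) / t
  τ_eq : τ = 3 / μg
  τt_eq : ∀ t, τt t = τ / t
  η_eq : ∀ t, η t = (t : ℝ) / (2 * Lf + τ * ‖A‖ ^ 2)
  xh_eq : ∀ t ≥ 1, xh t = (1 - θ t) • xb t + θ t • x t
  x_succ : ∀ t ≥ 1, x (t + 1) =
    x t - η t • (f' (xh t) + (ContinuousLinearMap.adjoint A) (yh t))
  xb_succ : ∀ t ≥ 1, xb (t + 1) = (1 - θ t) • xb t + θ t • x (t + 1)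
  y_succ : ∀ t ≥ 1, ∀ z,
    ‖y (t + 1) - (y t + τt t • A (x (t + 1)))‖ ^ 2 / (2 * τt t) + g (y (t + 1)) ≤
      ‖z - (y t + τt t • A (x (t + 1)))‖ ^ 2 / (2 * τt t) + g z
  yh_eq : ∀ t ≥ 1, yh t = α t • (y t - y (t - 1)) + y t
  yb_succ : ∀ t ≥ 1, yb (t + 1) = (1 - θ t) • yb t + θ t • y (t + 1)

namespace IsFullyAccelLDPD

variable {f : E → ℝ} {f' : E → E} {g : F → ℝ} {A : E →L[ℝ] F} {Lf μg τ : ℝ}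
  {θ α τt η : ℕ → ℝ} {x xb xh : ℕ → E} {y yb yh : ℕ → F} {xs : E} {ys : F} {t : ℕ}

theorem tau_pos (h : IsFullyAccelLDPD f' g A Lf μg τ θ α τt η x xb xh y yb yh) (hμg : 0 < μg) :
    0 < τ := by
  rw [h.τ_eq]; positivity

theorem gap_succ_le (h : IsFullyAccelLDPD f' g A Lf μg τ θ α τt η x xb xh y yb yh)
    (hsmooth : ∀ u v, f u ≤ f v + ⟪f' v, u - v⟫ + Lf / 2 * ‖u - v‖ ^ 2)
    (hfconv : ∀ u v, f v + ⟪f' v, u - v⟫ ≤ f u) (hg : ConvexOn ℝ univ g) (hLf : 0 ≤ Lf)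
    (hτ : 0 ≤ τ) (ht : 1 ≤ t) :
    τ * t * (t + 1) * (lagrangian f g A (xb (t + 1)) ys - lagrangian f g A xs (yb (t + 1))) ≤
      τ * t * (t - 1) * (lagrangian f g A (xb t) ys - lagrangian f g A xs (yb t)) +
        2 * τ * t * (⟪f' (xh t), x (t + 1) - xs⟫ + ⟪A (x (t + 1)), ys⟫ - ⟪A xs, y (t + 1)⟫ +
          g (y (t + 1)) - g ys) + 2 * τ * Lf * ‖x (t + 1) - x t‖ ^ 2 := by
  have hT : (1 : ℝ) ≤ t := by exact_mod_cast ht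
  have hθ := h.θ_eq t
  have hθ0 : 0 ≤ θ t := by rw [hθ]; positivity
  have hθ1 : θ t ≤ 1 := by rw [hθ, div_le_one (by positivity)]; linarith
  have hf := smooth_convex_interpolation_le hsmooth hfconv hθ0 hθ1 (xb t) (x t) (x (t + 1)) xs
  rw [← h.xh_eq t ht, ← h.xb_succ t ht] at hf
  have hgc := hg.2 (mem_univ (yb t)) (mem_univ (y (t + 1))) (sub_nonneg.2 hθ1) hθ0
    (sub_add_cancel 1 (θ t))
  rw [← h.yb_succ t ht, smul_eq_mul, smul_eq_mul] at hgc
  have hAx : ⟪A (xb (t + 1)), ys⟫ = (1 - θ t) * ⟪A (xb t), ys⟫ + θ t * ⟪A (x (t + 1)), ys⟫ := by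
    rw [h.xb_succ t ht, map_add, map_smul, map_smul, inner_add_left, real_inner_smul_left,
      real_inner_smul_left]
  have hAy : ⟪A xs, yb (t + 1)⟫ = (1 - θ t) * ⟪A xs, yb t⟫ + θ t * ⟪A xs, y (t + 1)⟫ := by
    rw [h.yb_succ t ht, inner_add_right, real_inner_smul_right, real_inner_smul_right]
  have hgap : lagrangian f g A (xb (t + 1)) ys - lagrangian f g A xs (yb (t + 1)) ≤
      (1 - θ t) * (lagrangian f g A (xb t) ys - lagrangian f g A xs (yb t)) +
        θ t * (⟪f' (xh t), x (t + 1) - xs⟫ + ⟪A (x (t + 1)), ys⟫ - ⟪A xs, y (t + 1)⟫ +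
          g (y (t + 1)) - g ys) + Lf / 2 * θ t ^ 2 * ‖x (t + 1) - x t‖ ^ 2 := by
    simp only [lagrangian]
    rw [hAx, hAy]
    linarith
  have hscaled := mul_le_mul_of_nonneg_left hgap (by positivity : 0 ≤ τ * t * (t + 1))
  have hθ_scale : τ * t * (t + 1) * θ t = 2 * τ * t := by rw [hθ]; field_simp
  have hθ_scale' : τ * t * (t + 1) * (1 - θ t) = τ * t * (t - 1) := by rw [hθ]; field_simp; ring
  have hθ_sq : τ * t * (t + 1) * (Lf / 2 * θ t ^ 2) ≤ 2 * τ * Lf := by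
    have : τ * t * (t + 1) * (Lf / 2 * θ t ^ 2) = 2 * τ * Lf * (t / (t + 1)) := by
      rw [hθ]; field_simp
    rw [this]
    exact mul_le_of_le_one_right (by positivity) ((div_le_one (by positivity)).2 (by linarith))
  have hD := mul_le_mul_of_nonneg_right hθ_sq (sq_nonneg ‖x (t + 1) - x t‖)
  linear_combination hscaled + hD +
    (lagrangian f g A (xb t) ys - lagrangian f g A xs (yb t)) * hθ_scale' +
    (⟪f' (xh t), x (t + 1) - xs⟫ + ⟪A (x (t + 1)), ys⟫ - ⟪A xs, y (t + 1)⟫ +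
          g (y (t + 1)) - g ys) * hθ_scale

theorem smul_sub_succ_eq (h : IsFullyAccelLDPD f' g A Lf μg τ θ α τt η x xb xh y yb yh)
    (hLf : 0 ≤ Lf) (hτ : 0 < τ)
    (hsmooth : ∀ u v, f u ≤ f v + ⟪f' v, u - v⟫ + Lf / 2 * ‖u - v‖ ^ 2)
    (hxmin : ∀ u, lagrangian f g A xs ys ≤ lagrangian f g A u ys) (ht : 1 ≤ t) :
    (2 * Lf + τ * ‖A‖ ^ 2) • (x t - x (t + 1)) =
      (t : ℝ) • (f' (xh t) + (ContinuousLinearMap.adjoint A) (yh t)) := by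
  rcases eq_or_ne (2 * Lf + τ * ‖A‖ ^ 2) 0 with hC | hC
  · -- `Lf = 0` and `A = 0`: then `f` is constant, so `f' = 0` and both sides vanish
    have hLf0 : Lf = 0 := by nlinarith [sq_nonneg ‖A‖]
    have hA : A = 0 := norm_eq_zero.1 (pow_eq_zero_iff two_ne_zero |>.1 (by nlinarith))
    subst hA
    have hf' := eq_zero_of_le_tangent_of_isMinOn (fun u v => by simpa [hLf0] using hsmooth u v)
      (isMinOn_iff.2 fun u _ => by simpa [lagrangian] using hxmin u)
    simp [hLf0, hf']
  · rw [h.x_succ t ht, sub_sub_cancel, h.η_eq, smul_smul, mul_div_cancel₀ _ hC]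

theorem inner_primal_eq (h : IsFullyAccelLDPD f' g A Lf μg τ θ α τt η x xb xh y yb yh)
    (hLf : 0 ≤ Lf) (hτ : 0 < τ)
    (hsmooth : ∀ u v, f u ≤ f v + ⟪f' v, u - v⟫ + Lf / 2 * ‖u - v‖ ^ 2)
    (hxmin : ∀ u, lagrangian f g A xs ys ≤ lagrangian f g A u ys) (ht : 1 ≤ t) :
    2 * τ * t * (⟪f' (xh t), x (t + 1) - xs⟫ + ⟪A (x (t + 1) - xs), yh t⟫) =
      τ * (2 * Lf + τ * ‖A‖ ^ 2) *
        (‖xs - x t‖ ^ 2 - ‖xs - x (t + 1)‖ ^ 2 - ‖x (t + 1) - x t‖ ^ 2) := by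
  have hthree : ‖xs - x t‖ ^ 2 =
      ‖x (t + 1) - x t‖ ^ 2 + 2 * ⟪x t - x (t + 1), x (t + 1) - xs⟫ + ‖xs - x (t + 1)‖ ^ 2 := by
    rw [norm_sub_rev xs, ← sub_add_sub_cancel (x t) (x (t + 1)) xs, norm_add_sq_real,
      norm_sub_rev (x t) (x (t + 1)), norm_sub_rev (x (t + 1)) xs]
  calc 2 * τ * t * (⟪f' (xh t), x (t + 1) - xs⟫ + ⟪A (x (t + 1) - xs), yh t⟫)
      = 2 * τ * ⟪(t : ℝ) • (f' (xh t) + (ContinuousLinearMap.adjoint A) (yh t)),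
          x (t + 1) - xs⟫ := by
        rw [real_inner_smul_left, inner_add_left, ContinuousLinearMap.adjoint_inner_left,
          real_inner_comm (yh t)]
        ring
    _ = 2 * τ * ⟪(2 * Lf + τ * ‖A‖ ^ 2) • (x t - x (t + 1)), x (t + 1) - xs⟫ := by
        rw [h.smul_sub_succ_eq hLf hτ hsmooth hxmin ht]
    _ = _ := by rw [real_inner_smul_left, hthree]; ring

theorem dual_le (h : IsFullyAccelLDPD f' g A Lf μg τ θ α τt η x xb xh y yb yh)
    (hg : StrongConvexOn univ μg g) (hμg : 0 < μg) (ht : 1 ≤ t) :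
    2 * τ * t * (g (y (t + 1)) - g ys) ≤
      t ^ 2 * ‖ys - y t‖ ^ 2 - t ^ 2 * ‖y (t + 1) - y t‖ ^ 2 - (t + 1) ^ 2 * ‖ys - y (t + 1)‖ ^ 2 -
        2 * τ * t * ⟪A (x (t + 1)), ys - y (t + 1)⟫ := by
  have hτ := h.tau_pos hμg
  have hT : (1 : ℝ) ≤ t := by exact_mod_cast ht
  have hprox := hg.prox_le (by positivity : 0 < τ / t)
    (fun z => by simpa only [h.τt_eq] using h.y_succ t ht z) ys
  have hτμ : τ * μg = 3 := by rw [h.τ_eq]; field_simp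
  have hscaled := mul_le_mul_of_nonneg_left hprox (sq_nonneg (t : ℝ))
  have hcoef : (t + 1) ^ 2 * ‖ys - y (t + 1)‖ ^ 2 ≤
      (t : ℝ) ^ 2 * (1 + τ / t * μg) * ‖ys - y (t + 1)‖ ^ 2 := by
    have : (t : ℝ) ^ 2 * (1 + τ / t * μg) = t ^ 2 + 3 * t := by
      rw [← hτμ]; field_simp
    rw [this]
    exact mul_le_mul_of_nonneg_right (by linarith) (sq_nonneg _)
  have e1 : (t : ℝ) ^ 2 * (2 * (τ / t) * (g (y (t + 1)) - g ys)) =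
      2 * τ * t * (g (y (t + 1)) - g ys) := by field_simp
  have e2 : (t : ℝ) ^ 2 * (2 * (τ / t) * ⟪A (x (t + 1)), ys - y (t + 1)⟫) =
      2 * τ * t * ⟪A (x (t + 1)), ys - y (t + 1)⟫ := by field_simp
  linarith

theorem potential_succ_le (h : IsFullyAccelLDPD f' g A Lf μg τ θ α τt η x xb xh y yb yh)
    (hLf : 0 ≤ Lf) (hμg : 0 < μg)
    (hsmooth : ∀ u v, f u ≤ f v + ⟪f' v, u - v⟫ + Lf / 2 * ‖u - v‖ ^ 2)
    (hfconv : ∀ u v, f v + ⟪f' v, u - v⟫ ≤ f u) (hg : StrongConvexOn univ μg g)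
    (hxmin : ∀ u, lagrangian f g A xs ys ≤ lagrangian f g A u ys) (ht : 1 ≤ t) :
    ldpdPotential f g A Lf τ xs ys x xb y yb (t + 1) ≤
      ldpdPotential f g A Lf τ xs ys x xb y yb t := by
  have hτ := h.tau_pos hμg
  have hT : (1 : ℝ) ≤ t := by exact_mod_cast ht
  have hgap := h.gap_succ_le (xs := xs) (ys := ys) hsmooth hfconv
    (hg.convexOn fun r => by positivity) hLf hτ.le ht
  have hprimal := h.inner_primal_eq hLf hτ hsmooth hxmin ht
  have hdual := h.dual_le (ys := ys) hg hμg ht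
  have hyh : 2 * τ * t * ⟪A (x (t + 1) - xs), yh t⟫ =
      2 * τ * (t - 1) * ⟪A (x (t + 1) - xs), y t - y (t - 1)⟫ +
        2 * τ * t * ⟪A (x (t + 1) - xs), y t⟫ := by
    rw [h.yh_eq t ht, inner_add_right, real_inner_smul_right, h.α_eq]
    field_simp
  have hbilin : 2 * τ * t * (⟪A (x (t + 1)), ys⟫ - ⟪A xs, y (t + 1)⟫ -
        ⟪A (x (t + 1) - xs), y t⟫ - ⟪A (x (t + 1)), ys - y (t + 1)⟫) -
        2 * τ * (t - 1) * ⟪A (x (t + 1) - xs), y t - y (t - 1)⟫ =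
      2 * τ * t * ⟪A (x (t + 1) - xs), y (t + 1) - y t⟫ -
        2 * τ * (t - 1) * ⟪A (x t - xs), y t - y (t - 1)⟫ -
        2 * τ * (t - 1) * ⟪A (x (t + 1) - x t), y t - y (t - 1)⟫ := by
    simp only [map_sub, inner_sub_left, inner_sub_right]
    ring
  have hyoung := two_mul_mul_inner_apply_le A (x (t + 1) - x t) (y t - y (t - 1)) (-τ) (t - 1)
  simp only [ldpdPotential, Nat.cast_add, Nat.cast_one, Nat.add_sub_cancel]
  linarith

theorem potential_le_potential_one
    (h : IsFullyAccelLDPD f' g A Lf μg τ θ α τt η x xb xh y yb yh) (hLf : 0 ≤ Lf) (hμg : 0 < μg)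
    (hsmooth : ∀ u v, f u ≤ f v + ⟪f' v, u - v⟫ + Lf / 2 * ‖u - v‖ ^ 2)
    (hfconv : ∀ u v, f v + ⟪f' v, u - v⟫ ≤ f u) (hg : StrongConvexOn univ μg g)
    (hxmin : ∀ u, lagrangian f g A xs ys ≤ lagrangian f g A u ys) {n : ℕ} (hn : 1 ≤ n) :
    ldpdPotential f g A Lf τ xs ys x xb y yb n ≤ ldpdPotential f g A Lf τ xs ys x xb y yb 1 := by
  induction n, hn using Nat.le_induction with
  | base => exact le_rfl
  | succ n hn ih => exact (h.potential_succ_le hLf hμg hsmooth hfconv hg hxmin hn).trans ih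

end IsFullyAccelLDPD

end Algorithm

theorem stmt15_general {E F : Type*} [NormedAddCommGroup E] [InnerProductSpace ℝ E] [CompleteSpace E]
    [NormedAddCommGroup F] [InnerProductSpace ℝ F] [CompleteSpace F]
    (f : E → ℝ) (f' : E → E) (g : F → ℝ) (A : E →L[ℝ] F)
    (Lf μg : ℝ) (hLf : 0 ≤ Lf) (hμg : 0 < μg)
    (hsmooth : ∀ u v, f u ≤ f v + ⟪f' v, u - v⟫ + Lf / 2 * ‖u - v‖ ^ 2)
    (hfconv : ∀ u v, f v + ⟪f' v, u - v⟫ ≤ f u)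
    (hg : StrongConvexOn Set.univ μg g)
    (θ α τt η : ℕ → ℝ) (τ : ℝ)
    (hθ : ∀ t, θ t = 2 / ((t : ℝ) + 1)) (hα : ∀ t, α t = ((t : ℝ) - 1) / t)
    (hτ : τ = 3 / μg) (hτt : ∀ t, τt t = τ / t)
    (hη : ∀ t, η t = (t : ℝ) / (2 * Lf + τ * ‖A‖ ^ 2))
    (x xb xh : ℕ → E) (y yb yh : ℕ → F)
    (hxh : ∀ t ≥ 1, xh t = (1 - θ t) • xb t + θ t • x t)
    (hx : ∀ t ≥ 1, x (t + 1) =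
      x t - η t • (f' (xh t) + (ContinuousLinearMap.adjoint A) (yh t)))
    (hxb : ∀ t ≥ 1, xb (t + 1) = (1 - θ t) • xb t + θ t • x (t + 1))
    (hy : ∀ t ≥ 1, ∀ z,
      ‖y (t + 1) - (y t + τt t • A (x (t + 1)))‖ ^ 2 / (2 * τt t) + g (y (t + 1)) ≤
      ‖z - (y t + τt t • A (x (t + 1)))‖ ^ 2 / (2 * τt t) + g z)
    (hyh : ∀ t ≥ 1, yh t = α t • (y t - y (t - 1)) + y t)
    (hyb : ∀ t ≥ 1, yb (t + 1) = (1 - θ t) • yb t + θ t • y (t + 1))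
    (L : E → F → ℝ) (hL : ∀ u v, L u v = f u + ⟪A u, v⟫ - g v)
    (xs : E) (ys : F)
    (hsaddle : ∀ (x' : E) (y' : F), L xs y' ≤ L xs ys ∧ L xs ys ≤ L x' ys) :
    ∀ k : ℕ, 1 ≤ k →
      ‖yb (k + 1) - ys‖ ^ 2 ≤
        2 / (μg * (k : ℝ) * (k + 1)) *
          ((2 * Lf + τ * ‖A‖ ^ 2) * ‖xs - x 1‖ ^ 2 + ‖ys - y 1‖ ^ 2 / τ) := by
  intro k hk
  obtain rfl : L = lagrangian f g A := funext fun u => funext (hL u)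
  have h : IsFullyAccelLDPD f' g A Lf μg τ θ α τt η x xb xh y yb yh :=
    ⟨hθ, hα, hτ, hτt, hη, hxh, hx, hxb, hy, hyh, hyb⟩
  have hτ0 := h.tau_pos hμg
  have hbound := (hg.mul_sq_norm_le_ldpdPotential hLf hτ0.le hsaddle x xb y yb
    (Nat.le_add_left 1 k)).trans (h.potential_le_potential_one hLf hμg hsmooth hfconv hg
      (fun u => (hsaddle u ys).2) (Nat.le_add_left 1 k))
  rw [ldpdPotential_one] at hbound
  push_cast at hbound
  rw [div_mul_eq_mul_div, le_div_iff₀ (by positivity)]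
  refine le_of_mul_le_mul_left ?_ hτ0
  have hrhs : τ * (2 * ((2 * Lf + τ * ‖A‖ ^ 2) * ‖xs - x 1‖ ^ 2 + ‖ys - y 1‖ ^ 2 / τ)) =
      2 * (τ * (2 * Lf + τ * ‖A‖ ^ 2) * ‖xs - x 1‖ ^ 2 + ‖ys - y 1‖ ^ 2) := by
    field_simp
  rw [hrhs]
  linarith

theorem stmt15 {E F : Type*} [NormedAddCommGroup E] [InnerProductSpace ℝ E] [CompleteSpace E]
    [NormedAddCommGroup F] [InnerProductSpace ℝ F] [CompleteSpace F]
    (f : E → ℝ) (f' : E → E) (g : F → ℝ) (A : E →L[ℝ] F)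
    (Lf μg : ℝ) (hLf : 0 ≤ Lf) (hμg : 0 < μg)
    (hsmooth : ∀ u v, f u ≤ f v + ⟪f' v, u - v⟫ + Lf / 2 * ‖u - v‖ ^ 2)
    (hfconv : ∀ u v, f v + ⟪f' v, u - v⟫ ≤ f u)
    (hg : StrongConvexOn Set.univ μg g)
    (θ α τt η : ℕ → ℝ) (τ : ℝ)
    (hθ : ∀ t, θ t = 2 / ((t : ℝ) + 1)) (hα : ∀ t, α t = ((t : ℝ) - 1) / t)
    (hτ : τ = 3 / μg) (hτt : ∀ t, τt t = τ / t)
    (hη : ∀ t, η t = (t : ℝ) / (2 * Lf + τ * ‖A‖ ^ 2))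
    (x xb xh : ℕ → E) (y yb yh : ℕ → F)
    (hy0 : y 0 = y 1) (hxb1 : xb 1 = x 1) (hyb1 : yb 1 = y 1)
    (hxh : ∀ t ≥ 1, xh t = (1 - θ t) • xb t + θ t • x t)
    (hx : ∀ t ≥ 1, x (t + 1) =
      x t - η t • (f' (xh t) + (ContinuousLinearMap.adjoint A) (yh t)))
    (hxb : ∀ t ≥ 1, xb (t + 1) = (1 - θ t) • xb t + θ t • x (t + 1))
    (hy : ∀ t ≥ 1, ∀ z,
      ‖y (t + 1) - (y t + τt t • A (x (t + 1)))‖ ^ 2 / (2 * τt t) + g (y (t + 1)) ≤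
      ‖z - (y t + τt t • A (x (t + 1)))‖ ^ 2 / (2 * τt t) + g z)
    (hyh : ∀ t ≥ 1, yh t = α t • (y t - y (t - 1)) + y t)
    (hyb : ∀ t ≥ 1, yb (t + 1) = (1 - θ t) • yb t + θ t • y (t + 1))
    (L : E → F → ℝ) (hL : ∀ u v, L u v = f u + ⟪A u, v⟫ - g v)
    (xs : E) (ys : F)
    (hsaddle : ∀ (x' : E) (y' : F), L xs y' ≤ L xs ys ∧ L xs ys ≤ L x' ys) :
    ∀ k : ℕ, 1 ≤ k →
      ‖yb (k + 1) - ys‖ ^ 2 ≤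
        2 / (μg * (k : ℝ) * (k + 1)) *
          ((2 * Lf + τ * ‖A‖ ^ 2) * ‖xs - x 1‖ ^ 2 + ‖ys - y 1‖ ^ 2 / τ) :=
  stmt15_general f f' g A Lf μg hLf hμg hsmooth hfconv hg θ α τt η τ hθ hα hτ hτt hη x xb xh y yb yh
    hxh hx hxb hy hyh hyb L hL xs ys hsaddle
end

section
/- One-step EDPD gap bound: if f is μ_f-strongly convex and g is μ_g-strongly convex, with x_{t+1} = argmin_x f(x)+⟨Ax, ŷ_t⟩+‖x−x_t‖²/(2η_t), y_{t+1} = prox_{τ_t g}(y_t + τ_t Ax_{t+1}), ŷ_t = (y_t − y_{t−1})α_t + y_t, then E_{t+1} := L(x_{t+1}, y) − L(x, y_{t+1}) ≤ ⟨x − x_{t+1}, x_{t+1} − x_t⟩/η_t − (μ_f/2)‖x − x_{t+1}‖² + ⟨y − y_{t+1}, y_{t+1} − y_t⟩/τ_t − (μ_g/2)‖y − y_{t+1}‖² + ⟨Ax − Ax_{t+1}, y_t − y_{t+1}⟩ − α_t⟨Ax − Ax_t, y_{t−1} − y_t⟩ + α_t⟨Ax_t − Ax_{t+1}, y_t − y_{t−1}⟩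 for all (x,y). -/
open scoped RealInnerProductSpace

theorem stmt19 {E F : Type*} [NormedAddCommGroup E] [InnerProductSpace ℝ E] [CompleteSpace E]
    [NormedAddCommGroup F] [InnerProductSpace ℝ F] [CompleteSpace F]
    (f : E → ℝ) (g : F → ℝ) (A : E →L[ℝ] F)
    (μf μg η τ α : ℝ) (hμf : 0 ≤ μf) (hμg : 0 ≤ μg)
    (hη : 0 < η) (hτ : 0 < τ) (hα : 0 ≤ α)
    (x0 x1 : E) (ym1 y0 y1 yh : F)
    (hyh : yh = α • (y0 - ym1) + y0)
    -- primal optimality: a subgradient p of f at x1 with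
    -- 0 = p + Aᵀŷ + (x1 − x0)/η, and μf-strong convexity of f along p
    (hprim : ∃ p : E, p + (ContinuousLinearMap.adjoint A) yh + (1 / η) • (x1 - x0) = 0 ∧
      ∀ z, f x1 + ⟪z - x1, p⟫ + μf / 2 * ‖z - x1‖ ^ 2 ≤ f z)
    -- dual optimality: a subgradient q of g at y1 with
    -- 0 = (y1 − y0 − τ A x1)/τ + q, and μg-strong convexity of g along q
    (hdual : ∃ q : F, (1 / τ) • (y1 - y0 - τ • A x1) + q = 0 ∧
      ∀ z, g y1 + ⟪z - y1, q⟫ + μg / 2 * ‖z - y1‖ ^ 2 ≤ g z)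
    (L : E → F → ℝ) (hL : ∀ u v, L u v = f u + ⟪A u, v⟫ - g v) :
    ∀ (x : E) (y : F),
      L x1 y - L x y1 ≤
        ⟪x - x1, x1 - x0⟫ / η - μf / 2 * ‖x - x1‖ ^ 2
        + ⟪y - y1, y1 - y0⟫ / τ - μg / 2 * ‖y - y1‖ ^ 2
        + ⟪A x - A x1, y0 - y1⟫ - α * ⟪A x - A x0, ym1 - y0⟫
        + α * ⟪A x0 - A x1, y0 - ym1⟫ := by

  intro x y
  obtain ⟨p, hp, hfp⟩ := hprim
  obtain ⟨q, hq, hgq⟩ := hdual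
  have hfx := hfp x
  have hgy := hgq y
  have h1 : ⟪x - x1, p⟫ + ⟪A (x - x1), yh⟫ + (1/η) * ⟪x - x1, x1 - x0⟫ = 0 := by
    have := congrArg (fun z => ⟪x - x1, z⟫) hp
    simpa [inner_add_right, inner_smul_right, ContinuousLinearMap.adjoint_inner_right]
      using this
  have h2 : (1/τ) * (⟪y - y1, y1 - y0⟫ - τ * ⟪y - y1, A x1⟫) + ⟪y - y1, q⟫ = 0 := by
    have := congrArg (fun z => ⟪y - y1, z⟫) hq
    simpa [inner_add_right, inner_sub_right, inner_smul_right, mul_sub] using this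
  have hA : ⟪A (x - x1), yh⟫ = ⟪A x - A x1, α • (y0 - ym1) + y0⟫ := by rw [hyh, map_sub]
  rw [hL, hL]
  have hexp : ⟪A x - A x1, α • (y0 - ym1) + y0⟫
      = α * ⟪A x - A x1, y0 - ym1⟫ + ⟪A x - A x1, y0⟫ := by
    simp [inner_add_right, real_inner_smul_right]
  have e1 : ⟪A x - A x1, y0 - y1⟫ = ⟪A x - A x1, y0⟫ - ⟪A x - A x1, y1⟫ := by
    rw [inner_sub_right]
  have e2 : α * ⟪A x - A x0, ym1 - y0⟫ = -(α * ⟪A x - A x0, y0 - ym1⟫) := by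
    rw [show ym1 - y0 = -(y0 - ym1) by abel, inner_neg_right]; ring
  have e3 : α * ⟪A x - A x0, y0 - ym1⟫ + α * ⟪A x0 - A x1, y0 - ym1⟫
      = α * ⟪A x - A x1, y0 - ym1⟫ := by
    rw [← mul_add, ← inner_add_left]; congr 2; abel
  have e4 : ⟪y - y1, A x1⟫ = ⟪A x1, y⟫ - ⟪A x1, y1⟫ := by
    rw [inner_sub_left, real_inner_comm y, real_inner_comm y1]
  have e5 : ⟪A x - A x1, y1⟫ = ⟪A x, y1⟫ - ⟪A x1, y1⟫ := by rw [inner_sub_left]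
  have hτ' : (1/τ) * τ = 1 := by field_simp
  have hdivη : ⟪x - x1, x1 - x0⟫ / η = (1/η) * ⟪x - x1, x1 - x0⟫ := by ring
  have hdivτ : ⟪y - y1, y1 - y0⟫ / τ = (1/τ) * ⟪y - y1, y1 - y0⟫ := by ring
  have h2' : (1/τ) * ⟪y - y1, y1 - y0⟫ - ⟪y - y1, A x1⟫ + ⟪y - y1, q⟫ = 0 := by
    linear_combination h2 + (⟪y - y1, A x1⟫ : ℝ) * hτ'
  rw [hA, hexp] at h1
  rw [hdivη, hdivτ]
  linarith [h1, h2', hfx, hgy, e1, e2, e3, e4, e5]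
end
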